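/- arXiv:0704.2560 — 2 statements merged into one kernel-verified Lean document; each statement's English description precedes it below -/
import Mathlib

section
/- Let d ≥ 3 and K ⊆ ℤ^d finite. For w ∈ W^0_K let L_K(w) = sup{n ≥ 0 : w(n) ∈ K} (finite for every w ∈ W^0_K), and let 𝒯_K be the set of finite nearest-neighbor paths τ = (τ(0),…,τ(N_τ)) with τ(0), τ(N_τ) ∈ supp e_K. Then under Q_K the path segment (X_n)_{0≤n≤L_K} lies in 𝒯_K almost everywhere, and for all measurable A, B ⊆ (ℤ^d)^ℕ and τ ∈ 𝒯_K: Q_K[(X_{−n})_{n≥0} ∈ A, (X_n)_{0≤n≤L_K} = τ, (X_{n+L_K})_{n≥0} ∈ B] = P^K_{τ(0)}[A] · e_K(τ(0)) · P_{τ(0)}[X_n = τ(n) for 0 ≤ n ≤ N_τ] · e_K(τ(N_τ)) · P^K_{τ(N_τ)}[B], where P^K_x = P_x[· | H̃_K = ∞] and the event {(X_n)_{0≤n≤L_K} = τ} means L_K = N_τ and X_n = τ(n) for 0 ≤ n ≤ N_τ. -/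
/-!
Under `Q_K` the forward path is a simple random walk from `w 0`, and the backward path is
independent of it given `w 0`. On the event `{L_K = N, X_{[0,N]} = τ}` the forward path follows
`τ` and then, from time `N` on, never returns to `K`; the Markov property at time `N` splits its
probability into `P_{τ 0}[X_{[0,N]} = τ] · P_{τ N}[H̃_K = ∞, ·]`, and dividing out `e_K (τ 0)` and
`e_K (τ N)` produces the conditioned laws. The Markov property is checked on cylinders, where it is
the explicit formula for their probabilities, and extends by uniqueness of measures on the
π-system of cylinders. Since a path up to its last visit is one of countably many finite paths, the
same computation shows that `Q_K`-a.e. the last visit is to a point with `e_K ≠ 0`.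
-/

open MeasureTheory
open scoped ENNReal

abbrev Zd (d : ℕ) := Fin d → ℤ

def adj {d : ℕ} (x y : Zd d) : Prop := (∑ i, (x i - y i).natAbs) = 1

instance {d : ℕ} (x y : Zd d) : Decidable (adj x y) := by
  unfold adj; infer_instance

def IsSRW (d : ℕ) (P : Zd d → Measure (ℕ → Zd d)) : Prop :=
  (∀ x, IsProbabilityMeasure (P x)) ∧
  ∀ (x : Zd d) (N : ℕ) (γ : ℕ → Zd d), γ 0 = x →
    P x {w | ∀ k ≤ N, w k = γ k} =
      if ∀ k < N, adj (γ (k + 1)) (γ k) then ((2 * d : ℝ≥0∞))⁻¹ ^ N else 0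

def escSet (d : ℕ) (K : Finset (Zd d)) : Set (ℕ → Zd d) :=
  {ω | ∀ n : ℕ, 1 ≤ n → ω n ∉ K}

/-- The equilibrium measure `e_K`. -/
noncomputable def eqm (d : ℕ) (P : Zd d → Measure (ℕ → Zd d)) (K : Finset (Zd d))
    (x : Zd d) : ℝ≥0∞ :=
  if x ∈ K then P x (escSet d K) else 0

/-- The conditioned law `P^K_x[A] = P_x[A | H̃_K = ∞]`. -/
noncomputable def condEsc (d : ℕ) (P : Zd d → Measure (ℕ → Zd d)) (K : Finset (Zd d))
    (x : Zd d) (A : Set (ℕ → Zd d)) : ℝ≥0∞ :=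
  P x (A ∩ escSet d K) / P x (escSet d K)

def goodPath (d : ℕ) : Set (ℤ → Zd d) :=
  {w | (∀ n : ℤ, adj (w (n + 1)) (w n)) ∧ ∀ A : Finset (Zd d), {n : ℤ | w n ∈ A}.Finite}

abbrev WT (d : ℕ) := {w : ℤ → Zd d // w ∈ goodPath d}

def IsQK (d : ℕ) (P : Zd d → Measure (ℕ → Zd d)) (K : Finset (Zd d))
    (Q : Measure (WT d)) : Prop :=
  ∀ (x : Zd d) (A B : Set (ℕ → Zd d)), MeasurableSet A → MeasurableSet B →
    Q {w : WT d | (fun n : ℕ => w.1 (-(n : ℤ))) ∈ A ∧ w.1 0 = x ∧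
        (fun n : ℕ => w.1 (n : ℤ)) ∈ B}
      = if x ∈ K then P x (A ∩ escSet d K) * P x B else 0

/-- `L_K(w) = sup{n ≥ 0 : w(n) ∈ K}`, the last visit to `K` among nonnegative times
(junk value `0` if this set is empty or unbounded). -/
noncomputable def lastTime (d : ℕ) (K : Finset (Zd d)) (w : WT d) : ℕ :=
  sSup {n : ℕ | w.1 (n : ℤ) ∈ K}

namespace PathSpace

variable {α : Type*}

def cyl (N : ℕ) (γ : ℕ → α) : Set (ℕ → α) := {ω | ∀ k ≤ N, ω k = γ k}

def shift (N : ℕ) (ω : ℕ → α) : ℕ → α := fun n => ω (n + N)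

def concat (N : ℕ) (γ δ : ℕ → α) : ℕ → α := fun k => if k ≤ N then γ k else δ (k - N)

def cylinders (α : Type*) : Set (Set (ℕ → α)) := Set.range fun p : ℕ × (ℕ → α) => cyl p.1 p.2

lemma cyl_eq_of_mem {N : ℕ} {γ ω : ℕ → α} (h : ω ∈ cyl N γ) : cyl N γ = cyl N ω := by
  ext ρ
  exact forall₂_congr fun k hk => by rw [h k hk]

lemma mem_cyl_clamp (N : ℕ) (ω : ℕ → α) :
    ω ∈ cyl N fun k => ω (Fin.clamp k N) := fun k hk => by
  simp [Fin.clamp, min_eq_left hk]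

lemma cyl_inter_cyl_self (N M : ℕ) (ω : ℕ → α) : cyl N ω ∩ cyl M ω = cyl (max N M) ω := by
  ext ρ
  simp only [cyl, Set.mem_inter_iff, Set.mem_ofPred_eq, le_max_iff, or_imp, forall_and]

lemma isPiSystem_cylinders : IsPiSystem (cylinders α) := by
  rintro _ ⟨⟨N, γ⟩, rfl⟩ _ ⟨⟨M, δ⟩, rfl⟩ ⟨ω, hωγ, hωδ⟩
  exact ⟨⟨max N M, ω⟩, by
    simp only [cyl_eq_of_mem hωγ, cyl_eq_of_mem hωδ, cyl_inter_cyl_self]⟩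

lemma concat_of_le {N k : ℕ} (γ δ : ℕ → α) (hk : k ≤ N) : concat N γ δ k = γ k := if_pos hk

lemma concat_of_ge {N k : ℕ} {γ δ : ℕ → α} (h : δ 0 = γ N) (hk : N ≤ k) :
    concat N γ δ k = δ (k - N) := by
  unfold concat
  split_ifs with hkN
  · rw [show k = N by omega, Nat.sub_self, h]
  · rfl

lemma cyl_inter_shift_preimage_cyl {N M : ℕ} {γ δ : ℕ → α} (h : δ 0 = γ N) :
    cyl N γ ∩ shift N ⁻¹' cyl M δ = cyl (N + M) (concat N γ δ) := by
  ext ω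
  simp only [cyl, shift, Set.mem_inter_iff, Set.mem_preimage, Set.mem_ofPred_eq]
  constructor
  · rintro ⟨hγ, hδ⟩ k hk
    rcases le_total k N with hkN | hNk
    · rw [concat_of_le γ δ hkN, hγ k hkN]
    · rw [concat_of_ge h hNk, ← hδ (k - N) (by omega), Nat.sub_add_cancel hNk]
  · intro hρ
    refine ⟨fun k hk => by rw [hρ k (by omega), concat_of_le γ δ hk], fun k hk => ?_⟩
    rw [hρ (k + N) (by omega), concat_of_ge h (by omega), Nat.add_sub_cancel]

lemma forall_lt_concat_iff (r : α → α → Prop) {N M : ℕ} {γ δ : ℕ → α} (h : δ 0 = γ N) :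
    (∀ k < N + M, r (concat N γ δ (k + 1)) (concat N γ δ k)) ↔
      (∀ k < N, r (γ (k + 1)) (γ k)) ∧ ∀ k < M, r (δ (k + 1)) (δ k) := by
  constructor
  · intro H
    refine ⟨fun k hk => ?_, fun k hk => ?_⟩
    · simpa only [concat_of_le γ δ (by omega : k + 1 ≤ N), concat_of_le γ δ (by omega : k ≤ N)]
        using H k (by omega)
    · simpa only [concat_of_ge h (by omega : N ≤ N + k + 1), concat_of_ge h (by omega : N ≤ N + k),
        show N + k + 1 - N = k + 1 by omega, Nat.add_sub_cancel_left] using H (N + k) (by omega)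
  · rintro ⟨Hγ, Hδ⟩ k hk
    rcases lt_or_ge k N with hkN | hNk
    · rw [concat_of_le γ δ (by omega : k + 1 ≤ N), concat_of_le γ δ hkN.le]
      exact Hγ k hkN
    · rw [concat_of_ge h (by omega : N ≤ k + 1), concat_of_ge h hNk,
        show k + 1 - N = k - N + 1 by omega]
      exact Hδ (k - N) (by omega)

variable [MeasurableSpace α]

lemma measurable_shift (N : ℕ) : Measurable (shift (α := α) N) :=
  measurable_pi_iff.2 fun n => measurable_pi_apply (n + N)

variable [MeasurableSingletonClass α]

lemma measurableSet_cyl (N : ℕ) (γ : ℕ → α) :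
    MeasurableSet (cyl N γ) := by
  simp only [cyl, Set.ofPred_forall]
  exact .iInter fun k => .iInter fun _ =>
    (measurableSet_singleton (γ k)).preimage (measurable_pi_apply k)

variable [Countable α]

lemma generateFrom_cylinders :
    MeasurableSpace.generateFrom (cylinders α) = MeasurableSpace.pi := by
  refine le_antisymm (MeasurableSpace.generateFrom_le ?_) (iSup_le fun n => ?_)
  · rintro _ ⟨⟨N, γ⟩, rfl⟩
    exact measurableSet_cyl N γ
  · -- the prefix up to time `n` takes countably many values, and its fibres are cylinders
    have hprefix :
        Measurable[MeasurableSpace.generateFrom (cylinders α)] fun ω (i : Fin (n + 1)) => ω i :=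
      @measurable_to_countable _ _ _ _ (MeasurableSpace.generateFrom _) _ fun ω => by
        refine MeasurableSpace.measurableSet_generateFrom ⟨⟨n, ω⟩, ?_⟩
        ext ρ
        simp [cyl, funext_iff, Fin.forall_iff]
    refine Measurable.comap_le ?_
    exact (measurable_pi_apply (Fin.last n)).comp hprefix

lemma ext_of_cyl {μ ν : Measure (ℕ → α)} [IsFiniteMeasure μ]
    (hcyl : ∀ N γ, μ (cyl N γ) = ν (cyl N γ)) (huniv : μ Set.univ = ν Set.univ) : μ = ν :=
  ext_of_generate_finite _ generateFrom_cylinders.symm isPiSystem_cylinders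
    (by rintro _ ⟨⟨N, γ⟩, rfl⟩; exact hcyl N γ) huniv

theorem measure_cyl_inter_shift_preimage {P : α → Measure (ℕ → α)}
    (hprob : ∀ x, IsProbabilityMeasure (P x))
    (hstart : ∀ x M δ, δ 0 ≠ x → P x (cyl M δ) = 0)
    (hconcat : ∀ x N M γ δ, δ 0 = γ N →
      P x (cyl (N + M) (concat N γ δ)) = P x (cyl N γ) * P (γ N) (cyl M δ))
    (x : α) (N : ℕ) (γ : ℕ → α) {C : Set (ℕ → α)} (hC : MeasurableSet C) :
    P x (cyl N γ ∩ shift N ⁻¹' C) = P x (cyl N γ) * P (γ N) C := by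
  have hrestrict (C : Set (ℕ → α)) (hC : MeasurableSet C) :
      ((P x).restrict (cyl N γ)).map (shift N) C = P x (cyl N γ ∩ shift N ⁻¹' C) := by
    rw [Measure.map_apply (measurable_shift N) hC,
      Measure.restrict_apply (measurable_shift N hC), Set.inter_comm]
  have hmeasures : ((P x).restrict (cyl N γ)).map (shift N) = P x (cyl N γ) • P (γ N) := by
    refine ext_of_cyl (fun M δ => ?_) ?_
    · rw [hrestrict _ (measurableSet_cyl M δ), Measure.smul_apply, smul_eq_mul]
      by_cases hδ : δ 0 = γ N
      · rw [cyl_inter_shift_preimage_cyl hδ, hconcat x N M γ δ hδ]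
      · have hempty : cyl N γ ∩ shift N ⁻¹' cyl M δ = ∅ :=
          Set.eq_empty_of_forall_notMem fun ω ⟨hγ, hδ'⟩ =>
            hδ ((hδ' 0 (Nat.zero_le M)).symm.trans (by simpa [shift] using hγ N le_rfl))
        rw [hempty, measure_empty, hstart _ M δ hδ, mul_zero]
    · rw [hrestrict _ MeasurableSet.univ, Measure.smul_apply, smul_eq_mul, measure_univ,
        mul_one, Set.preimage_univ, Set.inter_univ]
  rw [← hrestrict C hC, hmeasures, Measure.smul_apply, smul_eq_mul]

end PathSpace

open PathSpace

namespace IsSRW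

variable {d : ℕ} {P : Zd d → Measure (ℕ → Zd d)}

lemma measure_cyl (hP : IsSRW d P) {x : Zd d} {N : ℕ} {γ : ℕ → Zd d} (h : γ 0 = x) :
    P x (cyl N γ) = if ∀ k < N, adj (γ (k + 1)) (γ k) then ((2 * d : ℝ≥0∞))⁻¹ ^ N else 0 :=
  hP.2 x N γ h

lemma measure_cyl_of_ne (hP : IsSRW d P) {x : Zd d} (M : ℕ) {δ : ℕ → Zd d} (h : δ 0 ≠ x) :
    P x (cyl M δ) = 0 := by
  have := hP.1 x
  have hstart : P x (cyl 0 fun _ => x) = 1 := by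
    simp [hP.measure_cyl (N := 0) (γ := fun _ => x) rfl]
  have hnull : P x (cyl 0 fun _ => x)ᶜ = 0 :=
    (prob_compl_eq_zero_iff (measurableSet_cyl 0 _)).2 hstart
  refine measure_mono_null (fun ω hω (h0 : ω ∈ cyl 0 fun _ => x) => h ?_) hnull
  exact (hω 0 (Nat.zero_le M)).symm.trans (h0 0 le_rfl)

lemma measure_cyl_concat (hP : IsSRW d P) (x : Zd d) (N M : ℕ) (γ δ : ℕ → Zd d)
    (h : δ 0 = γ N) :
    P x (cyl (N + M) (concat N γ δ)) = P x (cyl N γ) * P (γ N) (cyl M δ) := by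
  by_cases hx : γ 0 = x
  · rw [hP.measure_cyl (by rwa [concat_of_le γ δ (Nat.zero_le N)]), hP.measure_cyl hx,
      hP.measure_cyl h]
    simp only [forall_lt_concat_iff _ h]
    split_ifs <;> simp_all [pow_add]
  · rw [hP.measure_cyl_of_ne _ (by rwa [concat_of_le γ δ (Nat.zero_le N)]),
      hP.measure_cyl_of_ne _ hx, zero_mul]

lemma measure_cyl_inter_shift_preimage (hP : IsSRW d P) (x : Zd d) (N : ℕ) (γ : ℕ → Zd d)
    {C : Set (ℕ → Zd d)} (hC : MeasurableSet C) :
    P x (cyl N γ ∩ shift N ⁻¹' C) = P x (cyl N γ) * P (γ N) C :=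
  PathSpace.measure_cyl_inter_shift_preimage hP.1 (fun _ M _ h => hP.measure_cyl_of_ne M h)
    hP.measure_cyl_concat x N γ hC

end IsSRW

section LastVisit

variable {d : ℕ} {K : Finset (Zd d)}

lemma measurableSet_escSet (K : Finset (Zd d)) : MeasurableSet (escSet d K) := by
  simp only [escSet, Set.ofPred_forall]
  exact .iInter fun n => .iInter fun _ =>
    (Set.to_countable (K : Set (Zd d))ᶜ).measurableSet.preimage (measurable_pi_apply n)

lemma finite_setOf_mem (K : Finset (Zd d)) (w : WT d) : {n : ℕ | w.1 n ∈ K}.Finite :=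
  (w.2.2 K).preimage (f := Nat.cast) Nat.cast_injective.injOn

lemma lastTime_mem {w : WT d} (h0 : w.1 0 ∈ K) : w.1 (lastTime d K w) ∈ K :=
  Set.Nonempty.csSup_mem (s := {n : ℕ | w.1 n ∈ K}) ⟨0, h0⟩ (finite_setOf_mem K w)

lemma lastTime_eq_iff {w : WT d} {N : ℕ} (hN : w.1 N ∈ K) :
    lastTime d K w = N ↔ shift N (fun n : ℕ => w.1 n) ∈ escSet d K := by
  have hafter : shift N (fun n : ℕ => w.1 n) ∈ escSet d K ↔ ∀ m > N, w.1 m ∉ K := by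
    refine ⟨fun h m hm => ?_, fun h n hn => h (n + N) (by omega)⟩
    simpa [shift, Nat.sub_add_cancel hm.le] using h (m - N) (by omega)
  rw [hafter]
  refine ⟨fun hL m hm hmK => ?_, fun h => ?_⟩
  · exact absurd (le_csSup (finite_setOf_mem K w).bddAbove hmK) (by unfold lastTime at hL; omega)
  · exact IsGreatest.csSup_eq ⟨hN, fun m hm => not_lt.1 fun hlt => h m hlt hm⟩

lemma setOf_lastTime_eq {N : ℕ} {τ : ℕ → Zd d} (hτN : τ N ∈ K)
    (A B : Set (ℕ → Zd d)) :
    {w : WT d | (fun n : ℕ => w.1 (-(n : ℤ))) ∈ A ∧ lastTime d K w = N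
        ∧ (∀ k : ℕ, k ≤ N → w.1 (k : ℤ) = τ k) ∧ (fun n : ℕ => w.1 ((n : ℤ) + (N : ℤ))) ∈ B}
      = {w : WT d | (fun n : ℕ => w.1 (-(n : ℤ))) ∈ A ∧ w.1 0 = τ 0
        ∧ (fun n : ℕ => w.1 (n : ℤ)) ∈ cyl N τ ∩ shift N ⁻¹' (B ∩ escSet d K)} := by
  ext w
  have hshift : shift N (fun n : ℕ => w.1 n) = fun n : ℕ => w.1 ((n : ℤ) + (N : ℤ)) := by
    ext n
    simp [shift]
  have hN (hτ : ∀ k : ℕ, k ≤ N → w.1 (k : ℤ) = τ k) : w.1 N ∈ K := by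
    simpa [hτ N le_rfl] using hτN
  simp only [Set.mem_ofPred_eq, Set.mem_inter_iff, Set.mem_preimage, hshift]
  refine and_congr_right fun _ => ⟨fun ⟨hL, hτ, hB⟩ => ?_, fun ⟨_, hτ, hB, hesc⟩ => ?_⟩
  · refine ⟨by simpa using hτ 0 (Nat.zero_le N), hτ, hB, ?_⟩
    rwa [lastTime_eq_iff (hN hτ), hshift] at hL
  · exact ⟨(lastTime_eq_iff (hN hτ)).2 (hshift ▸ hesc), hτ, hB⟩

end LastVisit

section QK

variable {d : ℕ} {P : Zd d → Measure (ℕ → Zd d)} {K : Finset (Zd d)} {QK : Measure (WT d)}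

lemma mem_of_eqm_ne_zero {x : Zd d} (h : eqm d P K x ≠ 0) : x ∈ K := by
  by_contra hx
  exact h (if_neg hx)

lemma condEsc_mul_eqm {x : Zd d} (hx : x ∈ K) (h : eqm d P K x ≠ 0) [IsFiniteMeasure (P x)]
    (A : Set (ℕ → Zd d)) : condEsc d P K x A * eqm d P K x = P x (A ∩ escSet d K) := by
  rw [eqm, if_pos hx] at h ⊢
  exact ENNReal.div_mul_cancel h (measure_ne_top _ _)

lemma IsQK.measure_start_eq (hQK : IsQK d P K QK) (x : Zd d) [IsProbabilityMeasure (P x)] :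
    QK {w | w.1 0 = x} = eqm d P K x := by
  have := hQK x Set.univ Set.univ .univ .univ
  simp only [Set.mem_univ, true_and, and_true, Set.univ_inter, measure_univ, mul_one] at this
  rw [this, eqm]

lemma IsQK.ae_eqm_start_ne_zero (hprob : ∀ x, IsProbabilityMeasure (P x))
    (hQK : IsQK d P K QK) : ∀ᵐ w ∂QK, eqm d P K (w.1 0) ≠ 0 := by
  have hstart : Measurable fun w : WT d => w.1 0 :=
    (measurable_pi_apply 0).comp measurable_subtype_coe
  refine ae_of_ae_map (p := fun x => eqm d P K x ≠ 0) hstart.aemeasurable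
    (ae_iff_of_countable.2 fun x hx => ?_)
  have := hprob x
  rw [Measure.map_apply hstart (measurableSet_singleton x)] at hx
  rwa [← hQK.measure_start_eq x]

lemma IsQK.measure_lastTime_eq (hP : IsSRW d P) (hQK : IsQK d P K QK) {N : ℕ}
    {τ : ℕ → Zd d} (hτ0 : τ 0 ∈ K) (hτN : τ N ∈ K) {A B : Set (ℕ → Zd d)}
    (hA : MeasurableSet A) (hB : MeasurableSet B) :
    QK {w : WT d | (fun n : ℕ => w.1 (-(n : ℤ))) ∈ A ∧ lastTime d K w = N
        ∧ (∀ k : ℕ, k ≤ N → w.1 (k : ℤ) = τ k) ∧ (fun n : ℕ => w.1 ((n : ℤ) + (N : ℤ))) ∈ B}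
      = P (τ 0) (A ∩ escSet d K) * (P (τ 0) (cyl N τ) * P (τ N) (B ∩ escSet d K)) := by
  have hBesc := hB.inter (measurableSet_escSet K)
  rw [setOf_lastTime_eq hτN, hQK _ _ _ hA ((measurableSet_cyl N τ).inter
    (measurable_shift N hBesc)), if_pos hτ0, hP.measure_cyl_inter_shift_preimage _ _ _ hBesc]

lemma IsQK.measure_lastTime_eq_and_eqm_eq_zero (hP : IsSRW d P) (hQK : IsQK d P K QK) (N : ℕ)
    (τ : ℕ → Zd d) :
    QK {w : WT d | lastTime d K w = N ∧ (∀ k : ℕ, k ≤ N → w.1 (k : ℤ) = τ k) ∧ w.1 0 ∈ K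
      ∧ eqm d P K (w.1 N) = 0} = 0 := by
  by_cases hτ : τ 0 ∈ K ∧ τ N ∈ K ∧ eqm d P K (τ N) = 0
  · obtain ⟨hτ0, hτN, heqm⟩ := hτ
    rw [eqm, if_pos hτN] at heqm
    refine measure_mono_null ?_ ((hQK.measure_lastTime_eq hP hτ0 hτN .univ .univ).trans
      (by simp [heqm]))
    exact fun w ⟨hL, hw, _⟩ => ⟨Set.mem_univ _, hL, hw, Set.mem_univ _⟩
  · refine measure_mono_null (fun w ⟨hL, hw, h0, heqm⟩ => hτ ?_) measure_empty
    have hLK := hL ▸ lastTime_mem h0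
    simp only [← hw 0 (Nat.zero_le N), ← hw N le_rfl]
    exact ⟨h0, hLK, heqm⟩

lemma IsQK.ae_eqm_lastTime_ne_zero (hP : IsSRW d P) (hQK : IsQK d P K QK) :
    ∀ᵐ w ∂QK, w.1 0 ∈ K → eqm d P K (w.1 (lastTime d K w)) ≠ 0 := by
  simp only [ae_iff, Classical.not_imp, ne_eq, not_not]
  -- countable cover, indexed by the last visit time `N` and the path on `[0, N]`
  refine measure_mono_null (t := ⋃ (N : ℕ) (v : Fin (N + 1) → Zd d), {w : WT d |
      lastTime d K w = N ∧ (∀ k : ℕ, k ≤ N → w.1 (k : ℤ) = v (Fin.clamp k N)) ∧ w.1 0 ∈ K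
        ∧ eqm d P K (w.1 N) = 0}) ?_ (measure_iUnion_null fun N => measure_iUnion_null fun v =>
      hQK.measure_lastTime_eq_and_eqm_eq_zero hP N _)
  rintro w ⟨h0, heqm⟩
  exact Set.mem_iUnion₂.2 ⟨lastTime d K w, fun i => w.1 (i : ℕ), rfl,
    mem_cyl_clamp _ fun n : ℕ => w.1 n, h0, heqm⟩

end QK

theorem QK_last_visit_decomposition_general
    (d : ℕ) (P : Zd d → Measure (ℕ → Zd d)) (hP : IsSRW d P)
    (K : Finset (Zd d)) (QK : Measure (WT d)) (hQK : IsQK d P K QK) :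
    (∀ᵐ w ∂QK,
      (∀ k : ℕ, k < lastTime d K w → adj (w.1 ((k : ℤ) + 1)) (w.1 (k : ℤ)))
      ∧ (w.1 0 ∈ K ∧ eqm d P K (w.1 0) ≠ 0)
      ∧ (w.1 (lastTime d K w : ℤ) ∈ K ∧ eqm d P K (w.1 (lastTime d K w : ℤ)) ≠ 0))
    ∧ ∀ (N : ℕ) (τ : ℕ → Zd d),
        (∀ k < N, adj (τ (k + 1)) (τ k)) →
        τ 0 ∈ K → eqm d P K (τ 0) ≠ 0 →
        τ N ∈ K → eqm d P K (τ N) ≠ 0 →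
        ∀ (A B : Set (ℕ → Zd d)), MeasurableSet A → MeasurableSet B →
          QK {w : WT d | (fun n : ℕ => w.1 (-(n : ℤ))) ∈ A
              ∧ lastTime d K w = N
              ∧ (∀ k : ℕ, k ≤ N → w.1 (k : ℤ) = τ k)
              ∧ (fun n : ℕ => w.1 ((n : ℤ) + (N : ℤ))) ∈ B}
            = condEsc d P K (τ 0) A * eqm d P K (τ 0)
              * P (τ 0) {ω | ∀ k ≤ N, ω k = τ k}
              * eqm d P K (τ N) * condEsc d P K (τ N) B := by
  refine ⟨?_, fun N τ _ hτ0 he0 hτN heN A B hA hB => ?_⟩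
  · filter_upwards [hQK.ae_eqm_start_ne_zero hP.1, hQK.ae_eqm_lastTime_ne_zero hP]
      with w hstart hlast
    have h0 := mem_of_eqm_ne_zero hstart
    exact ⟨fun k _ => w.2.1 k, ⟨h0, hstart⟩, lastTime_mem h0, hlast h0⟩
  · have := hP.1 (τ 0)
    have := hP.1 (τ N)
    rw [hQK.measure_lastTime_eq hP hτ0 hτN hA hB, ← condEsc_mul_eqm hτ0 he0,
      ← condEsc_mul_eqm hτN heN, show {ω : ℕ → Zd d | ∀ k ≤ N, ω k = τ k} = cyl N τ from rfl]
    ring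

/-- **Theorem 1.1, (1.26).** Under `Q_K` the path segment up to the last visit to `K`
lies a.e. in `𝒯_K` (nearest-neighbor, with endpoints in the support of `e_K`), and the
decomposition formula (1.26) at the last visit to `K` holds. -/
theorem QK_last_visit_decomposition
    (d : ℕ) (hd : 3 ≤ d) (P : Zd d → Measure (ℕ → Zd d)) (hP : IsSRW d P)
    (K : Finset (Zd d)) (QK : Measure (WT d)) (hQK : IsQK d P K QK) :
    (∀ᵐ w ∂QK,
      (∀ k : ℕ, k < lastTime d K w → adj (w.1 ((k : ℤ) + 1)) (w.1 (k : ℤ)))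
      ∧ (w.1 0 ∈ K ∧ eqm d P K (w.1 0) ≠ 0)
      ∧ (w.1 (lastTime d K w : ℤ) ∈ K ∧ eqm d P K (w.1 (lastTime d K w : ℤ)) ≠ 0))
    ∧ ∀ (N : ℕ) (τ : ℕ → Zd d),
        (∀ k < N, adj (τ (k + 1)) (τ k)) →
        τ 0 ∈ K → eqm d P K (τ 0) ≠ 0 →
        τ N ∈ K → eqm d P K (τ N) ≠ 0 →
        ∀ (A B : Set (ℕ → Zd d)), MeasurableSet A → MeasurableSet B →
          QK {w : WT d | (fun n : ℕ => w.1 (-(n : ℤ))) ∈ A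
              ∧ lastTime d K w = N
              ∧ (∀ k : ℕ, k ≤ N → w.1 (k : ℤ) = τ k)
              ∧ (fun n : ℕ => w.1 ((n : ℤ) + (N : ℤ))) ∈ B}
            = condEsc d P K (τ 0) A * eqm d P K (τ 0)
              * P (τ 0) {ω | ∀ k ≤ N, ω k = τ k}
              * eqm d P K (τ N) * condEsc d P K (τ N) B :=
  QK_last_visit_decomposition_general d P hP K QK hQK
end

section
/- (Induction lemma for the renormalization scheme.) Let d ≥ 3, a = 1/(100d), and let L_n, ℓ_n be the scales defined from an integer L₀ > 1. Let c₁, c₃, c₄ > 0 be given. There exists a constant c depending only on d, c₁, c₃, c₄ with the following property. Suppose L₀ ≥ c, r is an integer with (d−2)·a·r ≥ 4d, u₀ > 0, u_{n+1} = (1 + c₁·ℓ_n^{−(d−2)})^{r+1}·u_n for n ≥ 0, and (a_n)_{n≥0} is a sequence of nonnegative reals satisfying a_{n+1} ≤ c₄·a_n·(L_n^{2(d−1)a²}·a_n + L_n^{2(d−1)a(1+a)}·u_n·c₃^r·L_n^{(d−2)(1−ar)}) for all n ≥ 0. If for some n one has a_n ≤ L_n^{−1} and u_n ≤ L_n^{(d−2)·a·r/2},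 then also a_{n+1} ≤ L_{n+1}^{−1} and u_{n+1} ≤ L_{n+1}^{(d−2)·a·r/2}. -/
/-!
Write `a = 1/(100d)`, `L = L_n`, `ℓ = ℓ_n` and choose `L₀` so large that `L^a` dominates
`200 c₄`, `c₃⁴` and `24 c₁`. Then `c₃^r ≤ L^{ar/4}`, and inserting `a_n ≤ L⁻¹`,
`u_n ≤ L^{(d-2)ar/2}` into the recursion bounds each of its two terms by `L^{-(1+a)}/200`:
the exponent `(d-2)(1-ar)` of the second term is very negative because `(d-2)ar ≥ 4d`.
As `ℓ ≤ 100 L^a`, this gives `a_{n+1} ≤ (ℓL)⁻¹ = L_{n+1}⁻¹`.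
For `u`, `(1 + c₁ℓ^{-(d-2)})^{r+1} ≤ exp((r+1)c₁/ℓ) ≤ ℓ^{(d-2)ar/2}` because `ℓ ≥ 1200 c₁`,
so `u_{n+1} ≤ (ℓL)^{(d-2)ar/2}`.
-/

/-- The length scales `L_n` of Section 3: `L_{n+1} = ℓ_n L_n`, `ℓ_n = 100⌊L_n^a⌋`,
`a = 1/(100d)`. -/
noncomputable def Lscale (d L0 : ℕ) : ℕ → ℕ
  | 0 => L0
  | n + 1 => (100 * ⌊(Lscale d L0 n : ℝ) ^ ((1 : ℝ) / (100 * d))⌋₊) * Lscale d L0 n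

/-- `ℓ_n = 100⌊L_n^a⌋`. -/
noncomputable def ellScale (d L0 n : ℕ) : ℕ :=
  100 * ⌊(Lscale d L0 n : ℝ) ^ ((1 : ℝ) / (100 * d))⌋₊

open Real

lemma half_le_natFloor {x : ℝ} (hx : 1 ≤ x) : x / 2 ≤ ⌊x⌋₊ := by
  rcases le_or_gt 2 x with h | h
  · linarith [Nat.sub_one_lt_floor x]
  · have : (1 : ℝ) ≤ ⌊x⌋₊ := by exact_mod_cast Nat.le_floor (by exact_mod_cast hx)
    linarith

lemma pow_le_rpow_div_of_pow_le {c L : ℝ} {k : ℕ} (hc : 0 ≤ c) (hL : 0 ≤ L) (hk : k ≠ 0)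
    (h : c ^ k ≤ L) (r : ℕ) : c ^ r ≤ L ^ ((r : ℝ) / k) := by
  have hck : c ≤ L ^ (k⁻¹ : ℝ) :=
    (le_rpow_inv_iff_of_pos hc hL (by positivity)).2 (by exact_mod_cast h)
  calc c ^ r ≤ (L ^ (k⁻¹ : ℝ)) ^ r := pow_le_pow_left₀ hc hck r
    _ = L ^ ((r : ℝ) / k) := by
      rw [← rpow_natCast, ← rpow_mul hL, div_eq_inv_mul]

section Scales

variable (d L0 : ℕ)

lemma Lscale_succ (n : ℕ) : Lscale d L0 (n + 1) = ellScale d L0 n * Lscale d L0 n := rfl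

lemma ellScale_le_mul_rpow (n : ℕ) :
    (ellScale d L0 n : ℝ) ≤ 100 * (Lscale d L0 n : ℝ) ^ ((1 : ℝ) / (100 * d)) := by
  rw [ellScale, Nat.cast_mul, Nat.cast_ofNat]
  gcongr
  exact Nat.floor_le (by positivity)

variable {d L0}

lemma mul_rpow_le_ellScale {n : ℕ} (h : 1 ≤ Lscale d L0 n) :
    50 * (Lscale d L0 n : ℝ) ^ ((1 : ℝ) / (100 * d)) ≤ ellScale d L0 n := by
  have := half_le_natFloor (one_le_rpow (by exact_mod_cast h) (by positivity) :
    (1 : ℝ) ≤ (Lscale d L0 n : ℝ) ^ ((1 : ℝ) / (100 * d)))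
  rw [ellScale, Nat.cast_mul, Nat.cast_ofNat]
  linarith

lemma hundred_le_ellScale {n : ℕ} (h : 1 ≤ Lscale d L0 n) : 100 ≤ ellScale d L0 n := by
  have : 1 ≤ ⌊(Lscale d L0 n : ℝ) ^ ((1 : ℝ) / (100 * d))⌋₊ :=
    Nat.le_floor (by exact_mod_cast one_le_rpow (by exact_mod_cast h) (by positivity))
  rw [ellScale]
  omega

lemma le_Lscale (h : 1 ≤ L0) (n : ℕ) : L0 ≤ Lscale d L0 n := by
  induction n with
  | zero => rfl
  | succ n ih =>
    rw [Lscale_succ]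
    have := hundred_le_ellScale (h.trans ih)
    nlinarith

end Scales

section Exponents

variable {d a r : ℝ}

lemma quadratic_exponent_le (hd : 3 ≤ d) (ha : a = 1 / (100 * d)) :
    2 * (d - 1) * a ^ 2 - 2 ≤ -(1 + 2 * a) := by
  have hda : 100 * d * a = 1 := by rw [ha]; field_simp
  have ha0 : 0 < a := by rw [ha]; positivity
  nlinarith

lemma mixed_exponent_le (hd : 3 ≤ d) (ha : a = 1 / (100 * d))
    (hr : 4 * d ≤ (d - 2) * a * r) :
    -1 + 2 * (d - 1) * a * (1 + a) + (d - 2) * a * r / 2 + a * r / 4 + (d - 2) * (1 - a * r)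
      ≤ -(1 + 2 * a) := by
  have hda : 100 * d * a = 1 := by rw [ha]; field_simp
  have ha0 : 0 < a := by rw [ha]; positivity
  have har : 0 ≤ a * r := by nlinarith
  nlinarith

lemma succ_mul_le_growth_exponent_mul {c ℓ : ℝ} (hd : 3 ≤ d) (ha : a = 1 / (100 * d))
    (hr : 4 * d ≤ (d - 2) * a * r) (hc : 0 ≤ c) (hℓ : 1200 * c ≤ ℓ) :
    (r + 1) * c ≤ (d - 2) * a * r / 2 * ℓ := by
  have hda : 100 * d * a = 1 := by rw [ha]; field_simp
  have ha0 : 0 < a := by rw [ha]; positivity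
  have hd2 : 1 / 300 ≤ (d - 2) * a := by nlinarith
  have hr1 : 1 ≤ r := by nlinarith
  have hr2 : r / 300 ≤ (d - 2) * a * r := by
    nlinarith [mul_le_mul_of_nonneg_right hd2 (by linarith : (0 : ℝ) ≤ r)]
  calc (r + 1) * c ≤ r / 600 * (1200 * c) := by nlinarith
    _ ≤ (d - 2) * a * r / 2 * ℓ := mul_le_mul (by linarith) hℓ (by linarith) (by linarith)

end Exponents

lemma mul_rpow_le_rpow_neg {L a c e : ℝ} (hL : 1 ≤ L) (hc : c ≤ L ^ a)
    (he : e ≤ -(1 + 2 * a)) : c * L ^ e ≤ L ^ (-(1 + a)) :=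
  calc c * L ^ e ≤ L ^ a * L ^ e := by gcongr
    _ = L ^ (a + e) := (rpow_add (by linarith) a e).symm
    _ ≤ L ^ (-(1 + a)) := rpow_le_rpow_of_exponent_le hL (by linarith)

lemma recursion_rhs_le {L a c₃ c₄ x u β E₁ E₂ E₃ : ℝ} {r : ℕ} (hL : 1 ≤ L)
    (hc₃ : 0 ≤ c₃) (hc₄ : 0 ≤ c₄) (h₄ : 200 * c₄ ≤ L ^ a) (h₃ : c₃ ^ 4 ≤ L ^ a)
    (hx0 : 0 ≤ x) (hx : x ≤ L⁻¹) (hu0 : 0 ≤ u) (hu : u ≤ L ^ β)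
    (hE₁ : E₁ - 2 ≤ -(1 + 2 * a)) (hE : -1 + E₂ + β + a * r / 4 + E₃ ≤ -(1 + 2 * a)) :
    c₄ * x * (L ^ E₁ * x + L ^ E₂ * u * c₃ ^ r * L ^ E₃) ≤ L ^ (-(1 + a)) / 100 := by
  have hL0 : 0 < L := by linarith
  have hc₃r : c₃ ^ r ≤ L ^ (a * r / 4) := by
    have := pow_le_rpow_div_of_pow_le hc₃ (by positivity) four_ne_zero h₃ r
    rwa [← rpow_mul hL0.le, Nat.cast_ofNat, ← mul_div_assoc] at this
  calc c₄ * x * (L ^ E₁ * x + L ^ E₂ * u * c₃ ^ r * L ^ E₃)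
      ≤ c₄ * L⁻¹ * (L ^ E₁ * L⁻¹ + L ^ E₂ * L ^ β * L ^ (a * r / 4) * L ^ E₃) := by
        gcongr
    _ = 200 * c₄ * L ^ (E₁ - 2) / 200
          + 200 * c₄ * L ^ (-1 + E₂ + β + a * r / 4 + E₃) / 200 := by
        rw [show E₁ - 2 = -1 + E₁ + -1 by ring]
        simp only [rpow_add hL0, rpow_neg_one]
        ring
    _ ≤ L ^ (-(1 + a)) / 200 + L ^ (-(1 + a)) / 200 := by
        gcongr
        · exact mul_rpow_le_rpow_neg hL h₄ hE₁
        · exact mul_rpow_le_rpow_neg hL h₄ hE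
    _ = L ^ (-(1 + a)) / 100 := by ring

lemma rpow_neg_div_le_inv {L ℓ a : ℝ} (hL : 0 < L) (hℓ0 : 0 < ℓ) (hℓ : ℓ ≤ 100 * L ^ a) :
    L ^ (-(1 + a)) / 100 ≤ (ℓ * L)⁻¹ := by
  have : L ^ (-(1 + a)) / 100 = (100 * L ^ a * L)⁻¹ := by
    rw [rpow_neg hL.le, rpow_add hL, rpow_one]
    ring
  rw [this]
  gcongr

lemma one_add_pow_le_rpow {ℓ x β : ℝ} {m : ℕ} (hℓ : exp 1 ≤ ℓ) (hx : 0 ≤ x)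
    (h : m * x ≤ β) : (1 + x) ^ m ≤ ℓ ^ β := by
  have hℓ0 : 0 < ℓ := (exp_pos 1).trans_le hℓ
  have hlog : 1 ≤ log ℓ := (le_log_iff_exp_le hℓ0).2 hℓ
  calc (1 + x) ^ m ≤ exp x ^ m := by
        gcongr
        linarith [add_one_le_exp x]
    _ = exp (m * x) := (exp_nat_mul x m).symm
    _ ≤ exp (log ℓ * β) := exp_le_exp.2 <| by
        nlinarith [mul_nonneg (Nat.cast_nonneg m) hx]
    _ = ℓ ^ β := (rpow_def_of_pos hℓ0 β).symm

lemma growth_factor_le {ℓ c β : ℝ} {k r : ℕ} (hℓ : 3 ≤ ℓ) (hc : 0 ≤ c) (hk : k ≠ 0)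
    (h : (r + 1) * c ≤ β * ℓ) : (1 + c * (ℓ ^ k)⁻¹) ^ (r + 1) ≤ ℓ ^ β := by
  have hℓ0 : 0 < ℓ := by linarith
  have hx : c * (ℓ ^ k)⁻¹ ≤ c / ℓ := by
    rw [div_eq_mul_inv]
    gcongr
    exact le_self_pow₀ (by linarith) hk
  refine one_add_pow_le_rpow (by linarith [exp_one_lt_d9]) (by positivity) ?_
  calc ((r + 1 : ℕ) : ℝ) * (c * (ℓ ^ k)⁻¹) ≤ (r + 1) * (c / ℓ) := by
        push_cast
        gcongr
    _ ≤ β := by rwa [← mul_div_assoc, div_le_iff₀ hℓ0]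

lemma pos_of_succ_eq_mul {u f : ℕ → ℝ} (h0 : 0 < u 0) (hf : ∀ n, 0 < f n)
    (h : ∀ n, u (n + 1) = f n * u n) (n : ℕ) : 0 < u n := by
  induction n with
  | zero => exact h0
  | succ n ih => rw [h n]; exact mul_pos (hf n) ih

/-- **Lemma 3.4 (induction lemma for the renormalization scheme).** With
`a = 1/(100d)`: if `L₀ ≥ c(d,c₁,c₃,c₄)`, `(d−2)·a·r ≥ 4d`,
`u_{n+1} = (1 + c₁ ℓ_n^{−(d−2)})^{r+1} u_n`, and the sequence `(a_n)` of nonnegative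
reals satisfies the recursion (3.58), then the bounds `a_n ≤ L_n⁻¹` and
`u_n ≤ L_n^{(d−2)·a·r/2}` propagate from `n` to `n+1`. -/
theorem renormalization_induction_lemma
    (d : ℕ) (hd : 3 ≤ d) (c₁ c₃ c₄ : ℝ) (hc₁ : 0 < c₁) (hc₃ : 0 < c₃) (hc₄ : 0 < c₄) :
    ∃ c : ℕ, ∀ L0 : ℕ, 1 < L0 → c ≤ L0 →
    ∀ r : ℕ, 4 * (d : ℝ) ≤ ((d : ℝ) - 2) * (1 / (100 * (d : ℝ))) * (r : ℝ) →
    ∀ u a : ℕ → ℝ, 0 < u 0 → (∀ n, 0 ≤ a n) →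
      (∀ n : ℕ, u (n + 1) =
        (1 + c₁ * ((ellScale d L0 n : ℝ) ^ (d - 2))⁻¹) ^ (r + 1) * u n) →
      (∀ n : ℕ, a (n + 1) ≤ c₄ * a n *
        ((Lscale d L0 n : ℝ) ^ (2 * ((d : ℝ) - 1) * (1 / (100 * (d : ℝ))) ^ 2) * a n
          + (Lscale d L0 n : ℝ)
              ^ (2 * ((d : ℝ) - 1) * (1 / (100 * (d : ℝ))) * (1 + 1 / (100 * (d : ℝ))))
            * u n * c₃ ^ r
            * (Lscale d L0 n : ℝ) ^ (((d : ℝ) - 2) * (1 - (1 / (100 * (d : ℝ))) * r)))) →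
      ∀ n : ℕ,
        (a n ≤ (Lscale d L0 n : ℝ)⁻¹
          ∧ u n ≤ (Lscale d L0 n : ℝ) ^ (((d : ℝ) - 2) * (1 / (100 * (d : ℝ))) * r / 2)) →
        a (n + 1) ≤ (Lscale d L0 (n + 1) : ℝ)⁻¹
          ∧ u (n + 1)
              ≤ (Lscale d L0 (n + 1) : ℝ)
                  ^ (((d : ℝ) - 2) * (1 / (100 * (d : ℝ))) * r / 2) := by
  set K : ℝ := 200 * c₄ + c₃ ^ 4 + 24 * c₁
  refine ⟨⌈K ^ (100 * d)⌉₊, fun L0 hL0 hcL0 r hr u a hu0 ha0 hu ha n ⟨han, hun⟩ => ?_⟩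
  have hd₃ : (3 : ℝ) ≤ d := by exact_mod_cast hd
  have hLn : 1 ≤ Lscale d L0 n := hL0.le.trans (le_Lscale hL0.le n)
  have hL : (1 : ℝ) ≤ Lscale d L0 n := by exact_mod_cast hLn
  have hK : K ≤ (Lscale d L0 n : ℝ) ^ (1 / (100 * (d : ℝ))) := by
    have hKL0 : K ^ (100 * d) ≤ (L0 : ℝ) := Nat.ceil_le.1 hcL0
    have := pow_le_rpow_div_of_pow_le (by positivity) (by positivity) (by positivity) hKL0 1
    rw [Nat.cast_one, pow_one, Nat.cast_mul, Nat.cast_ofNat] at this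
    exact this.trans (rpow_le_rpow (by positivity) (Nat.cast_le.2 (le_Lscale hL0.le n))
      (by positivity))
  have hℓ := mul_rpow_le_ellScale hLn
  have hℓ₀ : (100 : ℝ) ≤ ellScale d L0 n := by exact_mod_cast hundred_le_ellScale hLn
  have hun0 : 0 ≤ u n := (pos_of_succ_eq_mul hu0 (fun _ => by positivity) hu n).le
  rw [Lscale_succ, Nat.cast_mul]
  constructor
  · refine (ha n).trans <| (recursion_rhs_le hL hc₃.le hc₄.le (by linarith [pow_pos hc₃ 4])
      (by linarith) (ha0 n) han hun0 hun (quadratic_exponent_le hd₃ rfl) ?_).trans <|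
      rpow_neg_div_le_inv (by linarith) (by linarith) (ellScale_le_mul_rpow d L0 n)
    linarith [mixed_exponent_le (r := r) hd₃ rfl hr]
  · rw [hu n, mul_rpow (by positivity) (by positivity)]
    refine mul_le_mul (growth_factor_le (by linarith) hc₁.le (by omega) ?_) hun hun0
      (by positivity)
    exact succ_mul_le_growth_exponent_mul hd₃ rfl hr hc₁.le (by linarith [pow_pos hc₃ 4])
end
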